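/- If for all sign triples σ and all edge lengths x,y,z in [0,1] satisfying the triangle inequality one has ALG^σ(x,y,z) ≤ ρ·LP^σ(x,y,z), and f^+(0) = f^-(0) = 0, then in each step t of the pivot-based LP rounding algorithm, E[ALG_t | V_t] ≤ ρ·E[LP_t | V_t], where ALG_t is the number of constraints violated at step t and LP_t is the LP weight of edges removed at step t. -/

import Mathlib

attribute [local instance] Classical.propDecidable

section
variable {V : Type*} [Fintype V] [LinearOrder V]

/-- Probability that `v` joins the cluster when `w` is the pivot:
`1 - f⁺(x_wv)` for a positive edge, `1 - f⁻(x_wv)` for a negative edge. -/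
noncomputable def joinProb (pos : V → V → Bool) (x : V → V → ℝ) (fp fm : ℝ → ℝ)
    (w v : V) : ℝ :=
  1 - (if pos w v then fp (x w v) else fm (x w v))

/-- Probability that, with pivot `w` and active set `A`, the set of vertices (other than `w`)
joining the cluster is exactly `S` (vertices join independently). -/
noncomputable def clusterProb (pos : V → V → Bool) (x : V → V → ℝ) (fp fm : ℝ → ℝ)
    (A : Finset V) (w : V) (S : Finset V) : ℝ :=
  (∏ v ∈ S, joinProb pos x fp fm w v) *
    ∏ v ∈ (A.erase w) \ S, (1 - joinProb pos x fp fm w v)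

/-- `ALG_t` for cluster `C` and active set `A`: the number of positive edges of `A` with
exactly one endpoint in `C` plus negative edges of `A` with both endpoints in `C`. -/
noncomputable def algCount (pos : V → V → Bool) (A C : Finset V) : ℕ :=
  (Finset.univ.filter (fun p : V × V => p.1 ∈ A ∧ p.2 ∈ A ∧ p.1 < p.2 ∧
    (if pos p.1 p.2 then ((p.1 ∈ C ∧ p.2 ∉ C) ∨ (p.1 ∉ C ∧ p.2 ∈ C))
      else (p.1 ∈ C ∧ p.2 ∈ C)))).card

/-- `LP_t` for cluster `C` and active set `A`: the LP weight of the edges of `A` removed at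
this step, i.e. with at least one endpoint in `C`. -/
noncomputable def lpWeight (pos : V → V → Bool) (x : V → V → ℝ) (A C : Finset V) : ℝ :=
  ∑ p ∈ Finset.univ.filter (fun p : V × V => p.1 ∈ A ∧ p.2 ∈ A ∧ p.1 < p.2 ∧
      (p.1 ∈ C ∨ p.2 ∈ C)),
    (if pos p.1 p.2 then x p.1 p.2 else 1 - x p.1 p.2)

/-- `E[ALG_t | V_t = A]`: average over the uniform pivot `w ∈ A` and the random cluster. -/
noncomputable def expALG (pos : V → V → Bool) (x : V → V → ℝ) (fp fm : ℝ → ℝ)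
    (A : Finset V) : ℝ :=
  ((A.card : ℝ))⁻¹ * ∑ w ∈ A, ∑ S ∈ (A.erase w).powerset,
    clusterProb pos x fp fm A w S * (algCount pos A (insert w S) : ℝ)

/-- `E[LP_t | V_t = A]`. -/
noncomputable def expLP (pos : V → V → Bool) (x : V → V → ℝ) (fp fm : ℝ → ℝ)
    (A : Finset V) : ℝ :=
  ((A.card : ℝ))⁻¹ * ∑ w ∈ A, ∑ S ∈ (A.erase w).powerset,
    clusterProb pos x fp fm A w S * lpWeight pos x A (insert w S)

end

/-- `ALG^σ(x,y,z)` for a triangle `(u,v,w)` with signature `σ = (s₁,s₂,s₃)`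
(`s₁` the sign of `(v,w)` of length `x`, `s₂` of `(u,w)` of length `y`, `s₃` of `(u,v)` of
length `z`; `true` = positive): the sum over the three pivots of the probability that the
opposite edge is in disagreement. -/
noncomputable def ALGsig (fp fm : ℝ → ℝ) (s1 s2 s3 : Bool) (x y z : ℝ) : ℝ :=
  let g : Bool → ℝ → ℝ := fun s t => if s then fp t else fm t
  (if s3 then g s2 y + g s1 x - 2 * g s2 y * g s1 x else (1 - g s2 y) * (1 - g s1 x)) +
  (if s2 then g s3 z + g s1 x - 2 * g s3 z * g s1 x else (1 - g s3 z) * (1 - g s1 x)) +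
  (if s1 then g s3 z + g s2 y - 2 * g s3 z * g s2 y else (1 - g s3 z) * (1 - g s2 y))

/-- `LP^σ(x,y,z)`: the sum over the three pivots of the expected removed LP weight of the
opposite edge. -/
noncomputable def LPsig (fp fm : ℝ → ℝ) (s1 s2 s3 : Bool) (x y z : ℝ) : ℝ :=
  let g : Bool → ℝ → ℝ := fun s t => if s then fp t else fm t
  (if s3 then z else 1 - z) * (1 - g s2 y * g s1 x) +
  (if s2 then y else 1 - y) * (1 - g s3 z * g s1 x) +
  (if s1 then x else 1 - x) * (1 - g s3 z * g s2 y)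

/-!
Fix the pivot `w`. The cluster is a random subset of `A` containing each `u` independently with
probability `1 - a(u, w)`, where `a(u, w) = f^±(x_uw)`; since `f^±(0) = 0`, `a(w, w) = 0` and
the pivot itself is part of that product distribution. So an edge `uv` is violated, resp.
removed, with a probability depending only on `a(u, w)` and `a(v, w)`, and both expectations
become sums, over pivots `w` and edges `uv`, of such per-pivot costs and LP weights. Summing the
triangle hypothesis over all of `A³` counts every such term three times; loops, taken as positive
edges of length `0`, carry no LP weight and nonnegative cost, so they only help.
-/

open Finset

/-- The probability that a vertex joined to the pivot by an edge of sign `s` and length `t`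
stays out of the pivot's cluster. -/
noncomputable def avoidProb (fp fm : ℝ → ℝ) (s : Bool) (t : ℝ) : ℝ :=
  if s then fp t else fm t

/-- The probability that an edge of sign `s` is violated when its endpoints stay out of the
cluster independently with probabilities `a` and `b`. -/
def edgeCost (s : Bool) (a b : ℝ) : ℝ :=
  if s then a + b - 2 * a * b else (1 - a) * (1 - b)

def edgeLP (s : Bool) (len a b : ℝ) : ℝ :=
  (if s then len else 1 - len) * (1 - a * b)

theorem ALGsig_eq_edgeCost (fp fm : ℝ → ℝ) (s1 s2 s3 : Bool) (x y z : ℝ) :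
    ALGsig fp fm s1 s2 s3 x y z =
      edgeCost s3 (avoidProb fp fm s2 y) (avoidProb fp fm s1 x) +
        edgeCost s2 (avoidProb fp fm s3 z) (avoidProb fp fm s1 x) +
          edgeCost s1 (avoidProb fp fm s3 z) (avoidProb fp fm s2 y) :=
  rfl

theorem LPsig_eq_edgeLP (fp fm : ℝ → ℝ) (s1 s2 s3 : Bool) (x y z : ℝ) :
    LPsig fp fm s1 s2 s3 x y z =
      edgeLP s3 z (avoidProb fp fm s2 y) (avoidProb fp fm s1 x) +
        edgeLP s2 y (avoidProb fp fm s3 z) (avoidProb fp fm s1 x) +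
          edgeLP s1 x (avoidProb fp fm s3 z) (avoidProb fp fm s2 y) :=
  rfl

theorem avoidProb_mem_Icc {fp fm : ℝ → ℝ} (hfp : ∀ t ∈ Set.Icc (0:ℝ) 1, fp t ∈ Set.Icc (0:ℝ) 1)
    (hfm : ∀ t ∈ Set.Icc (0:ℝ) 1, fm t ∈ Set.Icc (0:ℝ) 1) (s : Bool) {t : ℝ}
    (ht : t ∈ Set.Icc (0:ℝ) 1) : avoidProb fp fm s t ∈ Set.Icc (0:ℝ) 1 := by
  cases s
  · exact hfm t ht
  · exact hfp t ht

section BernoulliSubset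

variable {ι : Type*} (q : ι → ℝ)

/-- The probability that the random subset of `T` containing each `t` independently with
probability `q t` equals `S`. -/
noncomputable def bernoulliWeight (T S : Finset ι) : ℝ :=
  (∏ t ∈ S, q t) * ∏ t ∈ T \ S, (1 - q t)

theorem sum_bernoulliWeight (T : Finset ι) : ∑ S ∈ T.powerset, bernoulliWeight q T S = 1 := by
  simp only [bernoulliWeight, ← prod_add, add_sub_cancel, prod_const_one]

def Disagrees (s : Bool) (C : Finset ι) (a b : ι) : Prop :=
  if s then (a ∈ C ∧ b ∉ C) ∨ (a ∉ C ∧ b ∈ C) else a ∈ C ∧ b ∈ C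

variable {q} {a b : ι} {T S : Finset ι}

theorem bernoulliWeight_insert_insert (ha : a ∉ T) (hS : S ⊆ T) :
    bernoulliWeight q (insert a T) (insert a S) = q a * bernoulliWeight q T S := by
  rw [bernoulliWeight, bernoulliWeight, insert_sdiff_insert, sdiff_insert_of_notMem ha,
    prod_insert fun h => ha (hS h), mul_assoc]

theorem bernoulliWeight_insert_of_subset (ha : a ∉ T) (hS : S ⊆ T) :
    bernoulliWeight q (insert a T) S = (1 - q a) * bernoulliWeight q T S := by
  rw [bernoulliWeight, bernoulliWeight, insert_sdiff_of_notMem _ fun h => ha (hS h),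
    prod_insert fun h => ha (mem_sdiff.1 h).1]
  ring

theorem sum_bernoulliWeight_powerset_insert (ha : a ∉ T) (F : Finset ι → ℝ) :
    ∑ S ∈ (insert a T).powerset, bernoulliWeight q (insert a T) S * F S =
      (1 - q a) * ∑ S ∈ T.powerset, bernoulliWeight q T S * F S +
        q a * ∑ S ∈ T.powerset, bernoulliWeight q T S * F (insert a S) := by
  rw [sum_powerset_insert ha, mul_sum, mul_sum]
  congr 1 <;> refine sum_congr rfl fun S hS => ?_
  · rw [bernoulliWeight_insert_of_subset ha (mem_powerset.1 hS), mul_assoc]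
  · rw [bernoulliWeight_insert_insert ha (mem_powerset.1 hS), mul_assoc]

theorem sum_bernoulliWeight_erase_mul_insert (ha : a ∈ T) (hqa : q a = 1)
    (F : Finset ι → ℝ) :
    ∑ S ∈ (T.erase a).powerset, bernoulliWeight q (T.erase a) S * F (insert a S) =
      ∑ C ∈ T.powerset, bernoulliWeight q T C * F C := by
  conv_rhs => rw [← insert_erase ha]
  rw [sum_bernoulliWeight_powerset_insert (notMem_erase a T), hqa]
  ring

theorem sum_bernoulliWeight_mul_ite_mem (ha : a ∈ T) :
    ∑ C ∈ T.powerset, bernoulliWeight q T C * (if a ∈ C then 1 else 0) = q a := by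
  rw [← insert_erase ha, sum_bernoulliWeight_powerset_insert (notMem_erase a T),
    sum_eq_zero fun C hC => by rw [if_neg fun h => notMem_erase a T (mem_powerset.1 hC h),
      mul_zero]]
  simp only [mem_insert_self, if_true, mul_one, sum_bernoulliWeight]
  ring

theorem sum_bernoulliWeight_mul_ite_mem_and_mem (ha : a ∈ T) (hb : b ∈ T) (hab : a ≠ b) :
    ∑ C ∈ T.powerset, bernoulliWeight q T C * (if a ∈ C ∧ b ∈ C then 1 else 0) =
      q a * q b := by
  rw [← insert_erase ha, sum_bernoulliWeight_powerset_insert (notMem_erase a T),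
    sum_eq_zero fun C hC => by
      rw [if_neg fun h => notMem_erase a T (mem_powerset.1 hC h.1), mul_zero]]
  have hmem : ∀ C : Finset ι, (a ∈ insert a C ∧ b ∈ insert a C) ↔ b ∈ C := by
    simp [hab.symm]
  simp only [hmem, sum_bernoulliWeight_mul_ite_mem (mem_erase.2 ⟨hab.symm, hb⟩)]
  ring

theorem sum_bernoulliWeight_mul_ite_disagrees (s : Bool) (ha : a ∈ T) (hb : b ∈ T)
    (hab : a ≠ b) :
    ∑ C ∈ T.powerset, bernoulliWeight q T C * (if Disagrees s C a b then 1 else 0) =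
      edgeCost s (1 - q a) (1 - q b) := by
  have hind : ∀ C : Finset ι, (if Disagrees s C a b then (1:ℝ) else 0) =
      if s then (if a ∈ C then 1 else 0) + (if b ∈ C then 1 else 0) -
        2 * (if a ∈ C ∧ b ∈ C then 1 else 0)
      else if a ∈ C ∧ b ∈ C then 1 else 0 := by
    intro C
    cases s <;> by_cases a ∈ C <;> by_cases b ∈ C <;> norm_num [Disagrees, *]
  cases s <;>
    simp only [hind, Bool.false_eq_true, if_false, if_true, mul_add, mul_sub, sum_add_distrib,
      sum_sub_distrib, mul_left_comm _ (2:ℝ), ← mul_sum, sum_bernoulliWeight_mul_ite_mem ha,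
      sum_bernoulliWeight_mul_ite_mem hb, sum_bernoulliWeight_mul_ite_mem_and_mem ha hb hab,
      edgeCost] <;>
    ring

theorem sum_bernoulliWeight_mul_ite_mem_or_mem (ha : a ∈ T) (hb : b ∈ T) (hab : a ≠ b) :
    ∑ C ∈ T.powerset, bernoulliWeight q T C * (if a ∈ C ∨ b ∈ C then 1 else 0) =
      1 - (1 - q a) * (1 - q b) := by
  have hind : ∀ C : Finset ι, (if a ∈ C ∨ b ∈ C then (1:ℝ) else 0) =
      (if a ∈ C then 1 else 0) + (if b ∈ C then 1 else 0) - (if a ∈ C ∧ b ∈ C then 1 else 0) := by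
    intro C
    by_cases a ∈ C <;> by_cases b ∈ C <;> simp [*]
  simp only [hind, mul_add, mul_sub, sum_add_distrib, sum_sub_distrib,
    sum_bernoulliWeight_mul_ite_mem ha, sum_bernoulliWeight_mul_ite_mem hb,
    sum_bernoulliWeight_mul_ite_mem_and_mem ha hb hab]
  ring

end BernoulliSubset

theorem sum_sum_sum_rotate {ι : Type*} (A : Finset ι) (G : ι → ι → ι → ℝ) :
    ∑ u ∈ A, ∑ v ∈ A, ∑ w ∈ A, (G w u v + G v u w + G u v w) =
      3 * ∑ u ∈ A, ∑ v ∈ A, ∑ w ∈ A, G u v w := by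
  have h₁ : ∑ u ∈ A, ∑ v ∈ A, ∑ w ∈ A, G w u v = ∑ u ∈ A, ∑ v ∈ A, ∑ w ∈ A, G u v w :=
    (sum_congr rfl fun _ _ => sum_comm).trans sum_comm
  have h₂ : ∑ u ∈ A, ∑ v ∈ A, ∑ w ∈ A, G v u w = ∑ u ∈ A, ∑ v ∈ A, ∑ w ∈ A, G u v w :=
    sum_comm
  simp only [sum_add_distrib, h₁, h₂]
  ring

section TriangleSums

variable {ι : Type*} [LinearOrder ι]

noncomputable def edgePairs (A : Finset ι) : Finset (ι × ι) :=
  (A ×ˢ A).filter fun p => p.1 < p.2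

theorem sum_edgePairs (A : Finset ι) (F : ι → ι → ℝ) :
    ∑ p ∈ edgePairs A, F p.1 p.2 = ∑ u ∈ A, ∑ v ∈ A, if u < v then F u v else 0 := by
  rw [edgePairs, sum_filter, sum_product]

theorem sum_sum_eq_two_mul_sum_edgePairs_add (A : Finset ι) (F : ι → ι → ℝ)
    (hF : ∀ u v, F u v = F v u) :
    ∑ u ∈ A, ∑ v ∈ A, F u v = 2 * ∑ p ∈ edgePairs A, F p.1 p.2 + ∑ u ∈ A, F u u := by
  have hsplit : ∀ u v, F u v = (if u < v then F u v else 0) + (if v < u then F v u else 0) +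
      (if u = v then F u v else 0) := by
    intro u v
    rcases lt_trichotomy u v with h | rfl | h
    · simp [h, h.not_gt, h.ne]
    · simp
    · simp [h, h.not_gt, h.ne', hF u v]
  have hswap : ∑ u ∈ A, ∑ v ∈ A, (if v < u then F v u else 0) =
      ∑ u ∈ A, ∑ v ∈ A, (if u < v then F u v else 0) := sum_comm
  have hdiag : ∑ u ∈ A, ∑ v ∈ A, (if u = v then F u v else 0) = ∑ u ∈ A, F u u :=
    sum_congr rfl fun u hu => by rw [sum_ite_eq, if_pos hu]
  rw [sum_congr rfl fun u _ => sum_congr rfl fun v _ => hsplit u v]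
  simp only [sum_add_distrib]
  rw [hswap, hdiag, sum_edgePairs]
  ring

theorem sum_sum_edgePairs_le_of_triangle (A : Finset ι) (c l : ι → ι → ι → ℝ) (ρ : ℝ)
    (hc : ∀ w u v, c w u v = c w v u) (hl : ∀ w u v, l w u v = l w v u)
    (hc_loop : ∀ w u, 0 ≤ c w u u) (hl_loop : ∀ w u, l w u u = 0)
    (htri : ∀ u ∈ A, ∀ v ∈ A, ∀ w ∈ A,
      c w u v + c v u w + c u v w ≤ ρ * (l w u v + l v u w + l u v w)) :
    ∑ w ∈ A, ∑ p ∈ edgePairs A, c w p.1 p.2 ≤ ρ * ∑ w ∈ A, ∑ p ∈ edgePairs A, l w p.1 p.2 := by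
  have hsum : 3 * ∑ w ∈ A, ∑ u ∈ A, ∑ v ∈ A, c w u v ≤
      ρ * (3 * ∑ w ∈ A, ∑ u ∈ A, ∑ v ∈ A, l w u v) := by
    rw [← sum_sum_sum_rotate, ← sum_sum_sum_rotate, mul_sum]
    refine sum_le_sum fun u hu => ?_
    rw [mul_sum]
    refine sum_le_sum fun v hv => ?_
    rw [mul_sum]
    exact sum_le_sum fun w hw => htri u hu v hv w hw
  have hcK : ∑ w ∈ A, ∑ u ∈ A, ∑ v ∈ A, c w u v =
      2 * ∑ w ∈ A, ∑ p ∈ edgePairs A, c w p.1 p.2 + ∑ w ∈ A, ∑ u ∈ A, c w u u := by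
    simp only [sum_sum_eq_two_mul_sum_edgePairs_add A _ (hc _), sum_add_distrib, mul_sum]
  have hlK : ∑ w ∈ A, ∑ u ∈ A, ∑ v ∈ A, l w u v = 2 * ∑ w ∈ A, ∑ p ∈ edgePairs A, l w p.1 p.2 := by
    simp only [sum_sum_eq_two_mul_sum_edgePairs_add A _ (hl _), hl_loop, sum_const_zero, add_zero,
      mul_sum]
  have hloops : 0 ≤ ∑ w ∈ A, ∑ u ∈ A, c w u u :=
    sum_nonneg fun w _ => sum_nonneg fun u _ => hc_loop w u
  rw [hcK, hlK] at hsum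
  linarith

end TriangleSums

section Pivot

variable {V : Type*} (pos : V → V → Bool) (x : V → V → ℝ) (fp fm : ℝ → ℝ)

noncomputable def loopSign (u v : V) : Bool :=
  decide (u = v) || pos u v

noncomputable def pivotCost (w u v : V) : ℝ :=
  edgeCost (loopSign pos u v) (avoidProb fp fm (loopSign pos u w) (x u w))
    (avoidProb fp fm (loopSign pos v w) (x v w))

noncomputable def pivotLP (w u v : V) : ℝ :=
  edgeLP (loopSign pos u v) (x u v) (avoidProb fp fm (loopSign pos u w) (x u w))
    (avoidProb fp fm (loopSign pos v w) (x v w))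

def TriangleBound (ρ : ℝ) : Prop :=
  ∀ (s1 s2 s3 : Bool) (a b c : ℝ),
    a ∈ Set.Icc (0:ℝ) 1 → b ∈ Set.Icc (0:ℝ) 1 → c ∈ Set.Icc (0:ℝ) 1 →
    a ≤ b + c → b ≤ a + c → c ≤ a + b →
    ALGsig fp fm s1 s2 s3 a b c ≤ ρ * LPsig fp fm s1 s2 s3 a b c

variable {pos x fp fm}

theorem loopSign_comm (hsym : ∀ u v, pos u v = pos v u) (u v : V) :
    loopSign pos u v = loopSign pos v u := by
  rw [loopSign, loopSign, hsym, @eq_comm _ u v]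

theorem loopSign_of_ne {u v : V} (h : u ≠ v) : loopSign pos u v = pos u v := by
  simp [loopSign, h]

theorem loopSign_self (u : V) : loopSign pos u u = true := by
  simp [loopSign]

theorem joinProb_self (hxdiag : ∀ u, x u u = 0) (hfp0 : fp 0 = 0) (hfm0 : fm 0 = 0) (w : V) :
    joinProb pos x fp fm w w = 1 := by
  cases h : pos w w <;> simp [joinProb, h, hxdiag, hfp0, hfm0]

theorem one_sub_joinProb (hsym : ∀ u v, pos u v = pos v u)
    (hxsym : ∀ u v, x u v = x v u) (hxdiag : ∀ u, x u u = 0) (hfp0 : fp 0 = 0) (hfm0 : fm 0 = 0)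
    (w u : V) :
    1 - joinProb pos x fp fm w u = avoidProb fp fm (loopSign pos u w) (x u w) := by
  rw [joinProb, sub_sub_cancel]
  rcases eq_or_ne u w with rfl | h
  · cases pos u u <;> simp [loopSign_self, avoidProb, hxdiag, hfp0, hfm0]
  · rw [loopSign_of_ne h, hsym, hxsym]
    rfl

theorem ALGsig_loopSign (hsym : ∀ u v, pos u v = pos v u) (hxsym : ∀ u v, x u v = x v u)
    (u v w : V) :
    ALGsig fp fm (loopSign pos v w) (loopSign pos u w) (loopSign pos u v) (x v w) (x u w) (x u v) =
      pivotCost pos x fp fm w u v + pivotCost pos x fp fm v u w + pivotCost pos x fp fm u v w := by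
  rw [ALGsig_eq_edgeCost, pivotCost, pivotCost, pivotCost, loopSign_comm hsym w v,
    loopSign_comm hsym w u, loopSign_comm hsym v u, hxsym w v, hxsym w u, hxsym v u]

theorem LPsig_loopSign (hsym : ∀ u v, pos u v = pos v u) (hxsym : ∀ u v, x u v = x v u)
    (u v w : V) :
    LPsig fp fm (loopSign pos v w) (loopSign pos u w) (loopSign pos u v) (x v w) (x u w) (x u v) =
      pivotLP pos x fp fm w u v + pivotLP pos x fp fm v u w + pivotLP pos x fp fm u v w := by
  rw [LPsig_eq_edgeLP, pivotLP, pivotLP, pivotLP, loopSign_comm hsym w v,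
    loopSign_comm hsym w u, loopSign_comm hsym v u, hxsym w v, hxsym w u, hxsym v u]

theorem pivotCost_triangle_le (hsym : ∀ u v, pos u v = pos v u) (hxsym : ∀ u v, x u v = x v u)
    (hxb : ∀ u v, 0 ≤ x u v ∧ x u v ≤ 1) (hxtri : ∀ u v w, x u w ≤ x u v + x v w) {ρ : ℝ}
    (hρ : TriangleBound fp fm ρ) (u v w : V) :
    pivotCost pos x fp fm w u v + pivotCost pos x fp fm v u w + pivotCost pos x fp fm u v w ≤
      ρ * (pivotLP pos x fp fm w u v + pivotLP pos x fp fm v u w + pivotLP pos x fp fm u v w) := by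
  rw [← ALGsig_loopSign hsym hxsym, ← LPsig_loopSign hsym hxsym]
  refine hρ _ _ _ _ _ _ (hxb v w) (hxb u w) (hxb u v) ?_ (by linarith [hxtri u v w]) ?_
  · linarith [hxtri v u w, hxsym v u]
  · linarith [hxtri u w v, hxsym w v]

theorem pivotCost_comm (hsym : ∀ u v, pos u v = pos v u) (w u v : V) :
    pivotCost pos x fp fm w u v = pivotCost pos x fp fm w v u := by
  rw [pivotCost, pivotCost, loopSign_comm hsym u v, edgeCost, edgeCost]
  split_ifs <;> ring

theorem pivotLP_comm (hsym : ∀ u v, pos u v = pos v u) (hxsym : ∀ u v, x u v = x v u)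
    (w u v : V) : pivotLP pos x fp fm w u v = pivotLP pos x fp fm w v u := by
  rw [pivotLP, pivotLP, loopSign_comm hsym u v, hxsym u v, edgeLP, edgeLP,
    mul_comm (avoidProb _ _ _ _)]

theorem pivotCost_self_nonneg (hxb : ∀ u v, 0 ≤ x u v ∧ x u v ≤ 1)
    (hfp : ∀ t ∈ Set.Icc (0:ℝ) 1, fp t ∈ Set.Icc (0:ℝ) 1)
    (hfm : ∀ t ∈ Set.Icc (0:ℝ) 1, fm t ∈ Set.Icc (0:ℝ) 1) (w u : V) :
    0 ≤ pivotCost pos x fp fm w u u := by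
  obtain ⟨h0, h1⟩ := avoidProb_mem_Icc hfp hfm (loopSign pos u w) (hxb u w)
  rw [pivotCost, loopSign_self, edgeCost, if_pos rfl]
  nlinarith

theorem pivotLP_self (hxdiag : ∀ u, x u u = 0) (w u : V) : pivotLP pos x fp fm w u u = 0 := by
  rw [pivotLP, loopSign_self, hxdiag, edgeLP, if_pos rfl, zero_mul]

end Pivot

section Step

variable {V : Type*} [Fintype V] [LinearOrder V] {pos : V → V → Bool} {x : V → V → ℝ}
  {fp fm : ℝ → ℝ}

theorem algCount_eq_card_filter (A C : Finset V) :
    algCount pos A C = #((edgePairs A).filter fun p => Disagrees (pos p.1 p.2) C p.1 p.2) := by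
  rw [algCount, edgePairs, filter_filter]
  congr 1
  ext p
  rw [mem_filter, mem_filter]
  simp [Disagrees, and_assoc]

theorem lpWeight_eq_sum_filter (A C : Finset V) :
    lpWeight pos x A C = ∑ p ∈ (edgePairs A).filter (fun p => p.1 ∈ C ∨ p.2 ∈ C),
      (if pos p.1 p.2 then x p.1 p.2 else 1 - x p.1 p.2) := by
  rw [lpWeight, edgePairs, filter_filter]
  congr 1
  ext p
  rw [mem_filter, mem_filter]
  simp [and_assoc]

theorem sum_clusterProb_mul_algCount (hsym : ∀ u v, pos u v = pos v u)
    (hxsym : ∀ u v, x u v = x v u) (hxdiag : ∀ u, x u u = 0) (hfp0 : fp 0 = 0) (hfm0 : fm 0 = 0)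
    {A : Finset V} {w : V} (hw : w ∈ A) :
    ∑ S ∈ (A.erase w).powerset, clusterProb pos x fp fm A w S * (algCount pos A (insert w S) : ℝ)
      = ∑ p ∈ edgePairs A, pivotCost pos x fp fm w p.1 p.2 := by
  refine (sum_bernoulliWeight_erase_mul_insert hw (joinProb_self hxdiag hfp0 hfm0 w)
    fun C => (algCount pos A C : ℝ)).trans ?_
  simp only [algCount_eq_card_filter, natCast_card_filter, mul_sum]
  rw [sum_comm]
  refine sum_congr rfl fun p hp => ?_
  obtain ⟨⟨h1, h2⟩, hlt⟩ := by simpa only [edgePairs, mem_filter, mem_product] using hp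
  rw [sum_bernoulliWeight_mul_ite_disagrees _ h1 h2 hlt.ne, pivotCost, loopSign_of_ne hlt.ne,
    one_sub_joinProb hsym hxsym hxdiag hfp0 hfm0, one_sub_joinProb hsym hxsym hxdiag hfp0 hfm0]

theorem sum_clusterProb_mul_lpWeight (hsym : ∀ u v, pos u v = pos v u)
    (hxsym : ∀ u v, x u v = x v u) (hxdiag : ∀ u, x u u = 0) (hfp0 : fp 0 = 0) (hfm0 : fm 0 = 0)
    {A : Finset V} {w : V} (hw : w ∈ A) :
    ∑ S ∈ (A.erase w).powerset, clusterProb pos x fp fm A w S * lpWeight pos x A (insert w S)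
      = ∑ p ∈ edgePairs A, pivotLP pos x fp fm w p.1 p.2 := by
  refine (sum_bernoulliWeight_erase_mul_insert hw (joinProb_self hxdiag hfp0 hfm0 w)
    fun C => lpWeight pos x A C).trans ?_
  simp only [lpWeight_eq_sum_filter, sum_filter, mul_sum]
  rw [sum_comm]
  refine sum_congr rfl fun p hp => ?_
  obtain ⟨⟨h1, h2⟩, hlt⟩ := by simpa only [edgePairs, mem_filter, mem_product] using hp
  set len := if pos p.1 p.2 then x p.1 p.2 else 1 - x p.1 p.2
  have hfactor : ∀ C, bernoulliWeight (joinProb pos x fp fm w) A C *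
      (if p.1 ∈ C ∨ p.2 ∈ C then len else 0) =
        len * (bernoulliWeight (joinProb pos x fp fm w) A C *
          if p.1 ∈ C ∨ p.2 ∈ C then 1 else 0) := by
    intro C
    split_ifs <;> ring
  rw [sum_congr rfl fun C _ => hfactor C, ← mul_sum,
    sum_bernoulliWeight_mul_ite_mem_or_mem h1 h2 hlt.ne, pivotLP, edgeLP, loopSign_of_ne hlt.ne,
    one_sub_joinProb hsym hxsym hxdiag hfp0 hfm0, one_sub_joinProb hsym hxsym hxdiag hfp0 hfm0]

end Step

/-- If `ALG^σ(x,y,z) ≤ ρ·LP^σ(x,y,z)` for all signatures `σ` and all edge lengths in `[0,1]`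
satisfying the triangle inequality, and `f⁺(0) = f⁻(0) = 0`, then at each step of the
pivot-based LP rounding algorithm (with active set `A = V_t`),
`E[ALG_t | V_t] ≤ ρ·E[LP_t | V_t]`. -/
theorem step_alg_le_rho_lp {V : Type*} [Fintype V] [LinearOrder V]
    (pos : V → V → Bool) (hsym : ∀ u v, pos u v = pos v u)
    (x : V → V → ℝ) (hxsym : ∀ u v, x u v = x v u) (hxdiag : ∀ u, x u u = 0)
    (hxb : ∀ u v, 0 ≤ x u v ∧ x u v ≤ 1) (hxtri : ∀ u v w, x u w ≤ x u v + x v w)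
    (fp fm : ℝ → ℝ) (hfp0 : fp 0 = 0) (hfm0 : fm 0 = 0)
    (hfp : ∀ t ∈ Set.Icc (0:ℝ) 1, fp t ∈ Set.Icc (0:ℝ) 1)
    (hfm : ∀ t ∈ Set.Icc (0:ℝ) 1, fm t ∈ Set.Icc (0:ℝ) 1)
    (ρ : ℝ)
    (hmain : ∀ (s1 s2 s3 : Bool) (a b c : ℝ),
      a ∈ Set.Icc (0:ℝ) 1 → b ∈ Set.Icc (0:ℝ) 1 → c ∈ Set.Icc (0:ℝ) 1 →
      a ≤ b + c → b ≤ a + c → c ≤ a + b →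
      ALGsig fp fm s1 s2 s3 a b c ≤ ρ * LPsig fp fm s1 s2 s3 a b c)
    (A : Finset V) :
    expALG pos x fp fm A ≤ ρ * expLP pos x fp fm A := by
  have hsum := sum_sum_edgePairs_le_of_triangle A (pivotCost pos x fp fm) (pivotLP pos x fp fm) ρ
    (pivotCost_comm hsym) (pivotLP_comm hsym hxsym) (pivotCost_self_nonneg hxb hfp hfm)
    (pivotLP_self hxdiag) fun u _ v _ w _ => pivotCost_triangle_le hsym hxsym hxb hxtri hmain u v w
  rw [expALG, expLP,
    sum_congr rfl fun w hw => sum_clusterProb_mul_algCount hsym hxsym hxdiag hfp0 hfm0 hw,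
    sum_congr rfl fun w hw => sum_clusterProb_mul_lpWeight hsym hxsym hxdiag hfp0 hfm0 hw,
    mul_left_comm]
  exact mul_le_mul_of_nonneg_left hsum (by positivity)
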